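/- arXiv:nlin/0107076 — 9 statements merged into one kernel-verified Lean document; each statement's English description precedes it below -/
import Mathlib

section
/- Let P and Q be two commuting pseudodifferential operators, with P_+ and Q_+ their differential parts (nonnegative powers of ∂) and P_−, Q_− their strictly negative parts. Suppose the evolution derivations X_P, X_Q act by X_P(Q) = [P_+, Q] and X_Q(P) = [Q_+, P]. Then X_P(Q_+) − X_Q(P_+) − [P_+, Q_+] = 0. -/
/-!
Since `[P, Q] = 0`, splitting `P = P₊ + P₋` and `Q = Q₊ + Q₋` gives
`[P₊, Q] − [Q₊, P] = [P₊, Q₊] − [P₋, Q₋]`. Projecting onto the differential part,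
`[P₊, Q₊]` is unchanged and `[P₋, Q₋]` is killed. The evolution derivation `X_P` acts on
coefficients, so it commutes with the projection: `X_P(Q₊) = ([P₊, Q])₊`.
-/

theorem lie_sub_lie_eq_of_lie_eq_zero {L : Type*} [LieRing L] {P Q : L} (hPQ : ⁅P, Q⁆ = 0)
    (p q : L) : ⁅p, Q⁆ - ⁅q, P⁆ = ⁅p, q⁆ - ⁅P - p, Q - q⁆ := by
  rw [← lie_skew q P]
  simp only [sub_lie, lie_sub, hPQ]
  abel

theorem proj_lie_sub_proj_lie_eq_lie {L : Type*} [LieRing L] (plus : L →+ L)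
    (hplus_closed : ∀ a b : L, plus ⁅plus a, plus b⁆ = ⁅plus a, plus b⁆)
    (hminus : ∀ a b : L, plus ⁅a - plus a, b - plus b⁆ = 0)
    {P Q : L} (hPQ : ⁅P, Q⁆ = 0) :
    plus ⁅plus P, Q⁆ - plus ⁅plus Q, P⁆ = ⁅plus P, plus Q⁆ := by
  rw [← map_sub, lie_sub_lie_eq_of_lie_eq_zero hPQ, map_sub, hplus_closed, hminus, sub_zero]

theorem stmt2_general {A : Type*} [Ring A]
    (plus : A →+ A)
    (hplus_closed : ∀ a b : A,
      plus (plus a * plus b - plus b * plus a) = plus a * plus b - plus b * plus a)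
    (hminus : ∀ a b : A,
      plus ((a - plus a) * (b - plus b) - (b - plus b) * (a - plus a)) = 0)
    (P Q : A) (hPQ : P * Q = Q * P) :
    plus (plus P * Q - Q * plus P) - plus (plus Q * P - P * plus Q)
      - (plus P * plus Q - plus Q * plus P) = 0 := by
  let _ := LieRing.ofAssociativeRing (A := A)
  simp only [← Ring.lie_def] at hplus_closed hminus ⊢
  have hPQ_lie : ⁅P, Q⁆ = 0 := by rw [Ring.lie_def, hPQ, sub_self]
  rw [sub_eq_zero]
  exact proj_lie_sub_proj_lie_eq_lie (L := A) plus hplus_closed hminus hPQ_lie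

/-- **Wilson's formula for extended Lax flows.** In an abstract ring `A` of formal
pseudodifferential operators, let `plus` be the additive projection onto the
differential part (`P₊`), so `P₋ = P − P₊`.  It is idempotent, the differential
operators are closed under commutators, and the commutator of two strictly negative
parts has zero differential part.  If `P` and `Q` commute, then (with
`X_P(Q₊) = ([P₊, Q])₊` since the evolution derivation `X_P(Q) = [P₊,Q]` acts on
coefficients and commutes with the projection):
`X_P(Q₊) − X_Q(P₊) − [P₊, Q₊] = 0`. -/
theorem stmt2 {A : Type*} [Ring A]
    (plus : A →+ A)
    (hidem : ∀ a : A, plus (plus a) = plus a)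
    (hplus_closed : ∀ a b : A,
      plus (plus a * plus b - plus b * plus a) = plus a * plus b - plus b * plus a)
    (hminus : ∀ a b : A,
      plus ((a - plus a) * (b - plus b) - (b - plus b) * (a - plus a)) = 0)
    (P Q : A) (hPQ : P * Q = Q * P) :
    plus (plus P * Q - Q * plus P) - plus (plus Q * P - P * plus Q)
      - (plus P * plus Q - plus Q * plus P) = 0 :=
  stmt2_general plus hplus_closed hminus P Q hPQ
end

section
/- With Q_n(u) = (∂+u)^n(1), the addition formula Q_n(u+v) = ∑_{k=0}^{n} C(n,k) Q_k(u) Q_{n−k}(v) FAILS in general for noncommuting situations but HOLDS for commuting differential indeterminates: precisely, for u, v elements of a commutative differential ring, Q_n(u+v) = ∑_{k=0}^{n} C(n,k) Q_k(u) Q_{n−k}(v) for all n ≥ 0. -/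
/-! The operator `∂ + (u + v)` acts on a product `a * b` as `(∂ + u)` on `a` plus `(∂ + v)` on `b`.
Applied to the products `Q_k(u) Q_m(v)` it therefore raises one index at a time, exactly like a
derivation on the products `f⁽ᵏ⁾ g⁽ᵐ⁾`, and the general Leibniz rule produces the binomial sum. -/

open Finset

theorem iterate_eq_sum_choose_nsmul {M : Type*} [AddCommMonoid M] (T : M →+ M) (f : ℕ → ℕ → M)
    (hT : ∀ i j, T (f i j) = f (i + 1) j + f i (j + 1)) (n : ℕ) :
    T^[n] (f 0 0) = ∑ k ∈ range (n + 1), n.choose k • f k (n - k) := by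
  induction n with
  | zero => simp
  | succ n ih =>
    rw [Function.iterate_succ_apply', ih, map_sum, sum_choose_succ_nsmul, ← sum_add_distrib]
    refine sum_congr rfl fun k hk => ?_
    have hkn : n + 1 - k = n - k + 1 := by
      have := mem_range.mp hk
      omega
    rw [map_nsmul, hT, smul_add, hkn, add_comm]

theorem twisted_leibniz {R : Type*} [CommRing R] (d : R →+ R)
    (hleib : ∀ a b : R, d (a * b) = d a * b + a * d b) (u v a b : R) :
    d (a * b) + (u + v) * (a * b) = (d a + u * a) * b + a * (d b + v * b) := by
  rw [hleib]
  ring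

theorem stmt5_general {R : Type*} [CommRing R] (d : R →+ R)
    (hleib : ∀ a b : R, d (a * b) = d a * b + a * d b)
    (u v : R)
    (Q : R → ℕ → R) (hQ0 : ∀ w, Q w 0 = 1)
    (hQs : ∀ w n, Q w (n + 1) = d (Q w n) + w * Q w n) :
    ∀ n : ℕ, Q (u + v) n = ∑ k ∈ Finset.range (n + 1), n.choose k • (Q u k * Q v (n - k)) := by
  intro n
  set T : R →+ R := d + AddMonoidHom.mulLeft (u + v)
  have hQ_iterate : ∀ w m, Q w m = (d + AddMonoidHom.mulLeft w)^[m] 1 := by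
    intro w m
    induction m with
    | zero => simp [hQ0]
    | succ m ih => rw [hQs, Function.iterate_succ_apply', ← ih]; rfl
  have hT : ∀ i j, T (Q u i * Q v j) = Q u (i + 1) * Q v j + Q u i * Q v (j + 1) := by
    intro i j
    rw [hQs, hQs]
    exact twisted_leibniz d hleib u v _ _
  rw [← iterate_eq_sum_choose_nsmul T (fun i j => Q u i * Q v j) hT, hQ_iterate, hQ0, hQ0, mul_one]

/-- **Addition formula for the polynomials `Q_n`.** In a commutative differential
ring `(R, d)` of characteristic zero, with `Q w n = (∂+w)^n(1)` defined by the
recursion `Q w 0 = 1`, `Q w (n+1) = d(Q w n) + w·Q w n`, one has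
`Q_n(u+v) = ∑_{k=0}^n C(n,k) Q_k(u) Q_{n−k}(v)` for all `n ≥ 0`. -/
theorem stmt5 {R : Type*} [CommRing R] [CharZero R] (d : R →+ R)
    (hleib : ∀ a b : R, d (a * b) = d a * b + a * d b)
    (u v : R)
    (Q : R → ℕ → R) (hQ0 : ∀ w, Q w 0 = 1)
    (hQs : ∀ w n, Q w (n + 1) = d (Q w n) + w * Q w n) :
    ∀ n : ℕ, Q (u + v) n = ∑ k ∈ Finset.range (n + 1), n.choose k • (Q u k * Q v (n - k)) :=
  stmt5_general d hleib u v Q hQ0 hQs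
end

section
/- Define the Burgers hierarchy vector fields X_n on the differential field C{u} by X_n(u) = ∂(Q_n), where Q_n = (∂+u)^n(1). Then for all n, m ≥ 1: X_n(Q_m) = Q_{n+m} − Q_n·Q_m. In particular X_n(Q_m) = X_m(Q_n), i.e., the quantity X_n(Q_m) is symmetric in n and m. -/
/-!
Induction on `m` along `Q (m + 1) = (∂ + u) (Q m)`: applying `X_n` produces the extra term
`X_n(u) · Q m = ∂(Q n) · Q m`, which is exactly the Leibniz term needed to turn
`(∂ + u)(Q (n + m) - Q n · Q m)` into `Q (n + m + 1) - Q n · Q (m + 1)`.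
The right-hand side is symmetric in `n` and `m`, hence so is `X_n(Q m)`.
-/

theorem map_one_eq_zero_of_leibniz {R : Type*} [CommRing R] (X : R →+ R)
    (hder : ∀ a b : R, X (a * b) = X a * b + a * X b) : X 1 = 0 := by
  simpa using hder 1 1

theorem burgersFlow_apply_Q {R : Type*} [CommRing R] (d : R →+ R)
    (hleib : ∀ a b : R, d (a * b) = d a * b + a * d b)
    (u : R) (Q : ℕ → R) (hQ0 : Q 0 = 1) (hQ : ∀ k, Q (k + 1) = d (Q k) + u * Q k)
    (X : R →+ R) (hder : ∀ a b : R, X (a * b) = X a * b + a * X b)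
    (hXd : ∀ a : R, X (d a) = d (X a)) (k : ℕ) (hXu : X u = d (Q k)) (j : ℕ) :
    X (Q j) = Q (k + j) - Q k * Q j := by
  induction j with
  | zero => simp [hQ0, map_one_eq_zero_of_leibniz X hder]
  | succ j ih =>
    rw [hQ j, map_add, hXd, hder, hXu, ih, ← Nat.add_assoc, hQ (k + j), map_sub,
      hleib (Q k) (Q j)]
    ring

theorem stmt6_general {R : Type*} [CommRing R] (d : R →+ R)
    (hleib : ∀ a b : R, d (a * b) = d a * b + a * d b)
    (u : R) (Q : ℕ → R) (hQ0 : Q 0 = 1) (hQ : ∀ k, Q (k + 1) = d (Q k) + u * Q k)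
    (n m : ℕ)
    (Xn Xm : R →+ R)
    (hXn_der : ∀ a b : R, Xn (a * b) = Xn a * b + a * Xn b)
    (hXm_der : ∀ a b : R, Xm (a * b) = Xm a * b + a * Xm b)
    (hXn_d : ∀ a : R, Xn (d a) = d (Xn a))
    (hXm_d : ∀ a : R, Xm (d a) = d (Xm a))
    (hXn_u : Xn u = d (Q n)) (hXm_u : Xm u = d (Q m)) :
    Xn (Q m) = Q (n + m) - Q n * Q m ∧ Xn (Q m) = Xm (Q n) := by
  have hnm := burgersFlow_apply_Q d hleib u Q hQ0 hQ Xn hXn_der hXn_d n hXn_u m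
  have hmn := burgersFlow_apply_Q d hleib u Q hQ0 hQ Xm hXm_der hXm_d m hXm_u n
  refine ⟨hnm, ?_⟩
  rw [hnm, hmn, Nat.add_comm, mul_comm]

/-- **Burgers hierarchy identity** `X_n(Q_m) = Q_{n+m} − Q_n·Q_m`.  Here
`Q_j = (∂+u)^j(1)` and `X_n`, `X_m` are the evolution derivations of the Burgers
hierarchy: derivations of the differential ring commuting with `∂` and determined
by `X_n(u) = ∂(Q_n)`.  In particular `X_n(Q_m) = X_m(Q_n)` is symmetric in `n, m`. -/
theorem stmt6 {R : Type*} [CommRing R] (d : R →+ R)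
    (hleib : ∀ a b : R, d (a * b) = d a * b + a * d b)
    (u : R) (Q : ℕ → R) (hQ0 : Q 0 = 1) (hQ : ∀ k, Q (k + 1) = d (Q k) + u * Q k)
    (n m : ℕ) (hn : 1 ≤ n) (hm : 1 ≤ m)
    (Xn Xm : R →+ R)
    (hXn_der : ∀ a b : R, Xn (a * b) = Xn a * b + a * Xn b)
    (hXm_der : ∀ a b : R, Xm (a * b) = Xm a * b + a * Xm b)
    (hXn_d : ∀ a : R, Xn (d a) = d (Xn a))
    (hXm_d : ∀ a : R, Xm (d a) = d (Xm a))
    (hXn_u : Xn u = d (Q n)) (hXm_u : Xm u = d (Q m)) :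
    Xn (Q m) = Q (n + m) - Q n * Q m ∧ Xn (Q m) = Xm (Q n) :=
  stmt6_general d hleib u Q hQ0 hQ n m Xn Xm hXn_der hXm_der hXn_d hXm_d hXn_u hXm_u
end

section
/- The extended Burgers flows commute: for all n, m ≥ 1, X_n(Q_{m−1}) − X_m(Q_{n−1}) = Q_{n−1}·∂(Q_{m−1}) − Q_{m−1}·∂(Q_{n−1}), where X_n(u) = ∂(Q_n) and Q_j = (∂+u)^j(1). -/
/-!
A derivation `X` commuting with `∂` and with `X u = ∂ Q_N` acts on the `Q_k` by
`X Q_k = Q_{k+N} - Q_k Q_N`: applying `X` to `Q_{k+1} = (∂ + u) Q_k` produces the extra term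
`(X u) Q_k = ∂(Q_N) Q_k`, which is exactly what the Leibniz rule needs to move `∂ + u` past
the product `Q_k Q_N`. Inserting this formula into both sides, the `Q_{n+m-1}` terms cancel and
`Q_{n-1} Q_m - Q_{m-1} Q_n` reduces to the right-hand side by the recursion for `Q`.
-/

theorem flow_apply_Q {R : Type*} [CommRing R] (d : R →+ R)
    (hleib : ∀ a b : R, d (a * b) = d a * b + a * d b)
    (u : R) (Q : ℕ → R) (hQ0 : Q 0 = 1) (hQ : ∀ k, Q (k + 1) = d (Q k) + u * Q k)
    (N : ℕ) (X : R →+ R)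
    (hX_der : ∀ a b : R, X (a * b) = X a * b + a * X b)
    (hX_d : ∀ a : R, X (d a) = d (X a))
    (hX_u : X u = d (Q N)) (k : ℕ) :
    X (Q k) = Q (k + N) - Q k * Q N := by
  induction k with
  | zero =>
    have hX_one : X 1 = 0 := by simpa using hX_der 1 1
    simp [hQ0, hX_one]
  | succ k ih =>
    rw [hQ k, map_add, hX_d, hX_der, hX_u, ih, map_sub, hleib, Nat.add_right_comm, hQ (k + N)]
    ring

/-- **Commutativity of the extended Burgers flows.**  With `Q_j = (∂+u)^j(1)` and
the Burgers evolution derivations `X_n` (derivations commuting with `∂` with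
`X_n(u) = ∂(Q_n)`), for all `n, m ≥ 1`:
`X_n(Q_{m−1}) − X_m(Q_{n−1}) = Q_{n−1}·∂(Q_{m−1}) − Q_{m−1}·∂(Q_{n−1})`. -/
theorem stmt7 {R : Type*} [CommRing R] (d : R →+ R)
    (hleib : ∀ a b : R, d (a * b) = d a * b + a * d b)
    (u : R) (Q : ℕ → R) (hQ0 : Q 0 = 1) (hQ : ∀ k, Q (k + 1) = d (Q k) + u * Q k)
    (n m : ℕ) (hn : 1 ≤ n) (hm : 1 ≤ m)
    (Xn Xm : R →+ R)
    (hXn_der : ∀ a b : R, Xn (a * b) = Xn a * b + a * Xn b)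
    (hXm_der : ∀ a b : R, Xm (a * b) = Xm a * b + a * Xm b)
    (hXn_d : ∀ a : R, Xn (d a) = d (Xn a))
    (hXm_d : ∀ a : R, Xm (d a) = d (Xm a))
    (hXn_u : Xn u = d (Q n)) (hXm_u : Xm u = d (Q m)) :
    Xn (Q (m - 1)) - Xm (Q (n - 1))
      = Q (n - 1) * d (Q (m - 1)) - Q (m - 1) * d (Q (n - 1)) := by
  obtain ⟨i, rfl⟩ := Nat.exists_eq_add_of_le' hn
  obtain ⟨j, rfl⟩ := Nat.exists_eq_add_of_le' hm
  rw [Nat.add_sub_cancel, Nat.add_sub_cancel,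
    flow_apply_Q d hleib u Q hQ0 hQ _ Xn hXn_der hXn_d hXn_u,
    flow_apply_Q d hleib u Q hQ0 hQ _ Xm hXm_der hXm_d hXm_u,
    show j + (i + 1) = i + (j + 1) by omega, hQ i, hQ j]
  ring
end

section
/- Define operators A_n(ρ, ε) = −ρ·Q_n(u) + ε·(∂ + ρu)^n, where Q_n(u) = (∂+u)^n(1), ρ and ε are constants, and the first summand acts as multiplication by the function −ρQ_n(u). Then the formal adjoint satisfies −A_n(ρ, ε)† = A_n(−ρ, (−1)^{n+1} ε). -/
/-!
Multiplication operators are self-adjoint, so the `Q_n` term of `A_n` only changes sign, while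
`(∂ + ρu)† = -(∂ - ρu)` and anti-multiplicativity give `(ε (∂ + ρu)^n)† = (-1)^n (∂ - ρu)^n ε`,
and the constant `ε` commutes with `∂ - ρu`.
-/

theorem map_mul_pow_of_map_mul_rev {A B : Type*} [Monoid A] [Monoid B] (f : A → B)
    (hf : ∀ a b : A, f (a * b) = f b * f a) (a x : A) (n : ℕ) :
    f (a * x ^ n) = f x ^ n * f a := by
  induction n with
  | zero => simp
  | succ k ih => rw [pow_succ, ← mul_assoc, hf, ih, ← mul_assoc, ← pow_succ']

theorem commute_add_mul_of_deriv_eq_zero {R A : Type*} [CommRing R] [Ring A]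
    (d : R →+ R) (M : R →+* A) (D : A) (hcomm : ∀ f : R, D * M f = M f * D + M (d f))
    {c : R} (hc : d c = 0) (g : R) : Commute (M c) (D + M g) := by
  have hD : Commute (M c) D := by
    rw [Commute, SemiconjBy, hcomm, hc, map_zero, add_zero]
  exact hD.add_right ((Commute.all c g).map M)

theorem adj_add_mul {R A : Type*} [CommRing R] [Ring A] (M : R →+* A) (D : A) (adj : A →+ A)
    (hadjD : adj D = -D) (hadjM : ∀ f : R, adj (M f) = M f) (g : R) :
    adj (D + M g) = -(D + M (-g)) := by
  rw [map_add, hadjD, hadjM, map_neg]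
  abel

theorem stmt8_general {R A : Type*} [CommRing R] [Ring A]
    (d : R →+ R)
    (M : R →+* A) (D : A)
    (hcomm : ∀ f : R, D * M f = M f * D + M (d f))
    (adj : A →+ A)
    (hanti : ∀ a b : A, adj (a * b) = adj b * adj a)
    (hadjD : adj D = -D) (hadjM : ∀ f : R, adj (M f) = M f)
    (u ρ ε : R) (hε : d ε = 0)
    (Q : R → ℕ → R)
    (n : ℕ) :
    -adj (M (-(ρ * Q u n)) + M ε * (D + M (ρ * u)) ^ n)
      = M (-(-ρ * Q u n)) + M ((-1) ^ (n + 1) * ε) * (D + M (-ρ * u)) ^ n := by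
  have hswap : (D + M (-(ρ * u))) ^ n * M ε = M ε * (D + M (-(ρ * u))) ^ n :=
    ((commute_add_mul_of_deriv_eq_zero d M D hcomm hε _).pow_right n).eq.symm
  rw [map_add, map_mul_pow_of_map_mul_rev adj hanti, adj_add_mul M D adj hadjD hadjM, hadjM, hadjM,
    neg_pow, mul_assoc, hswap, neg_mul ρ u]
  simp only [map_mul, map_pow, map_neg, map_one, pow_succ]
  noncomm_ring

/-- **Self-duality of the Burgers extension family.**  In a ring `A` of differential
operators over a commutative differential ring `(R, d)` — with `M : R →+* A` the
multiplication operators, `D` the operator `∂` satisfying `D·M(f) = M(f)·D + M(d f)`,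
and `adj` the formal adjoint (additive, anti-multiplicative, `adj D = −D`,
`adj (M f) = M f`) — set `A_n(ρ, ε) = −ρ·Q_n(u) + ε·(∂ + ρu)^n`, where
`Q_n(u) = (∂+u)^n(1)` and `ε` is a constant (`d ε = 0`).  Then
`−A_n(ρ, ε)† = A_n(−ρ, (−1)^{n+1} ε)`. -/
theorem stmt8 {R A : Type*} [CommRing R] [Ring A]
    (d : R →+ R)
    (hleib : ∀ a b : R, d (a * b) = d a * b + a * d b)
    (M : R →+* A) (D : A)
    (hcomm : ∀ f : R, D * M f = M f * D + M (d f))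
    (adj : A →+ A)
    (hanti : ∀ a b : A, adj (a * b) = adj b * adj a)
    (hadjD : adj D = -D) (hadjM : ∀ f : R, adj (M f) = M f)
    (u ρ ε : R) (hε : d ε = 0)
    (Q : R → ℕ → R) (hQ0 : ∀ w, Q w 0 = 1)
    (hQs : ∀ w k, Q w (k + 1) = d (Q w k) + w * Q w k)
    (n : ℕ) :
    -adj (M (-(ρ * Q u n)) + M ε * (D + M (ρ * u)) ^ n)
      = M (-(-ρ * Q u n)) + M ((-1) ^ (n + 1) * ε) * (D + M (-ρ * u)) ^ n :=
  stmt8_general d M D hcomm adj hanti hadjD hadjM u ρ ε hε Q n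
end

section
/- Let G be a Lie algebra and let u ↦ M_u be a family of linear maps M_u : G → G indexed linearly by elements u of a module, defining a bracket on G ⊕ (module) by [(X,u),(Y,v)] = ([X,Y] + M_u(Y) − M_v(X), 0). This bracket satisfies the Jacobi identity if and only if (a) each M_u is a derivation of G, and (b) the maps commute pairwise: M_u ∘ M_v = M_v ∘ M_u for all u, v. -/
/-!
The Jacobiator of `extBracketM M` at `(X,u), (Y,v), (Z,w)` splits, after the Jacobi identity
of `G` cancels the terms `[X,[Y,Z]]`, into the Leibniz defects of `M_u, M_v, M_w` and the
commutators `[M_u, M_v]`, `[M_v, M_w]`, `[M_w, M_u]`. Testing on `(X,0), (Y,0), (0,u)` isolates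
the defect of `M_u` at `(X,Y)`; testing on `(X,0), (0,u), (0,v)` isolates `[M_u, M_v] X`.
-/

/-- The bracket on `G ⊕ W` associated to a family of maps `M_u : G → G`:
`[(X,u),(Y,v)] = ([X,Y] + M_u(Y) − M_v(X), 0)`. -/
def extBracketM {K G W : Type*} [Field K] [LieRing G] [LieAlgebra K G]
    [AddCommGroup W] [Module K W]
    (M : W →ₗ[K] G →ₗ[K] G) (p q : G × W) : G × W :=
  (⁅p.1, q.1⁆ + M p.2 q.1 - M q.2 p.1, 0)

section

variable {K G W : Type*} [Field K] [LieRing G] [LieAlgebra K G] [AddCommGroup W] [Module K W]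

def leibnizDefect (f : Module.End K G) (X Y : G) : G :=
  f ⁅X, Y⁆ - (⁅f X, Y⁆ + ⁅X, f Y⁆)

@[simp]
theorem leibnizDefect_zero_left (f : Module.End K G) (Y : G) : leibnizDefect f 0 Y = 0 := by
  simp [leibnizDefect]

@[simp]
theorem leibnizDefect_zero_right (f : Module.End K G) (X : G) : leibnizDefect f X 0 = 0 := by
  simp [leibnizDefect]

theorem extBracketM_jacobiator (M : W →ₗ[K] G →ₗ[K] G) (X Y Z : G) (u v w : W) :
    extBracketM M (X, u) (extBracketM M (Y, v) (Z, w))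
        + extBracketM M (Y, v) (extBracketM M (Z, w) (X, u))
        + extBracketM M (Z, w) (extBracketM M (X, u) (Y, v))
      = (leibnizDefect (M u) Y Z + leibnizDefect (M v) Z X + leibnizDefect (M w) X Y
          + ⁅M u, M v⁆ Z + ⁅M v, M w⁆ X + ⁅M w, M u⁆ Y, 0) := by
  simp only [extBracketM, leibnizDefect, Ring.lie_def, map_zero, LinearMap.zero_apply,
    sub_zero, map_add, map_sub, lie_add, lie_sub, Prod.mk_add_mk, add_zero,
    LinearMap.sub_apply, Module.End.mul_apply, Prod.mk.injEq, and_true]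
  rw [← lie_skew (M v Z) X, ← lie_skew (M u Y) Z, ← lie_skew (M w X) Y, ← sub_eq_zero,
    ← lie_jacobi X Y Z]
  abel

end

theorem stmt13_general {K G W : Type*} [Field K] [LieRing G] [LieAlgebra K G]
    [AddCommGroup W] [Module K W]
    (M : W →ₗ[K] G →ₗ[K] G) :
    (∀ x y z : G × W,
        extBracketM M x (extBracketM M y z) + extBracketM M y (extBracketM M z x)
          + extBracketM M z (extBracketM M x y) = 0)
      ↔ ((∀ (u : W) (X Y : G), M u ⁅X, Y⁆ = ⁅M u X, Y⁆ + ⁅X, M u Y⁆)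
          ∧ ∀ (u v : W) (X : G), M u (M v X) = M v (M u X)) := by
  constructor
  · intro h
    refine ⟨fun u X Y => ?_, fun u v X => ?_⟩
    · have hXYu := h (X, 0) (Y, 0) (0, u)
      simpa [extBracketM_jacobiator, leibnizDefect, Ring.lie_def, sub_eq_zero] using hXYu
    · have hXuv := h (X, 0) (0, u) (0, v)
      simpa [extBracketM_jacobiator, Ring.lie_def, sub_eq_zero] using hXuv
  · rintro ⟨hder, hcomm⟩ ⟨X, u⟩ ⟨Y, v⟩ ⟨Z, w⟩
    have hD (u : W) (X Y : G) : leibnizDefect (M u) X Y = 0 := sub_eq_zero.mpr (hder u X Y)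
    have hC (u v : W) : ⁅M u, M v⁆ = 0 :=
      LinearMap.ext fun X => by simp [Ring.lie_def, hcomm u v X]
    simp [extBracketM_jacobiator, hD, hC]

/-- **Linear one-dimensional extensions of linear Hamiltonian matrices (general
criterion).**  Let `G` be a Lie algebra over a field `K` of characteristic zero,
`W` a `K`-vector space, and `u ↦ M_u` a linear family of endomorphisms of `G`.
The bracket `[(X,u),(Y,v)] = ([X,Y] + M_u(Y) − M_v(X), 0)` on `G ⊕ W` satisfies
the Jacobi identity if and only if each `M_u` is a derivation of `G` and the
family commutes pairwise: `M_u ∘ M_v = M_v ∘ M_u`. -/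
theorem stmt13 {K G W : Type*} [Field K] [CharZero K] [LieRing G] [LieAlgebra K G]
    [AddCommGroup W] [Module K W]
    (M : W →ₗ[K] G →ₗ[K] G) :
    (∀ x y z : G × W,
        extBracketM M x (extBracketM M y z) + extBracketM M y (extBracketM M z x)
          + extBracketM M z (extBracketM M x y) = 0)
      ↔ ((∀ (u : W) (X Y : G), M u ⁅X, Y⁆ = ⁅M u X, Y⁆ + ⁅X, M u Y⁆)
          ∧ ∀ (u v : W) (X : G), M u (M v X) = M v (M u X)) :=
  stmt13_general M
end

section
/- In the classification of scalar extensions for Lax operators of order N ≥ 4: the system of equations (with α, γ, a, b, f, g unknowns, αγ ≠ 0, N ≥ 4): 2γf = 3αg; α[3(N−3)/N + f] = 2b(N−2)/N; γf − 3αg + 2γa = f(2−N); γb = f; 2b = 3α; −αg + γa = a(2−N) − b(N−1)(N−2)/3 − α((N−3)/2)²; γb = 2a + b + 3α(N−3)/2, has exactly the solutions γ = ±1 with α = 2γ/N, g = γ², f = 3/N, b = 3γ/N, a = 3(2+γ−N)/(2γN). In particular the first six equations force (γ−1)(γ²−1) = 0, i.e., γ ∈ {1, −1}. -/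
/-- **Classification of scalar extensions for Lax operators of order `N ≥ 4`
(Section 18).**  The system (18.10) in the unknowns `α, γ, a, b, f, g` with
`α ≠ 0`, `γ ≠ 0` has exactly the solutions `γ = ±1` with `α = 2γ/N`, `g = γ²`,
`f = 3/N`, `b = 3γ/N`, `a = 3(2+γ−N)/(2γN)`.  (In particular the equations force
`(γ−1)(γ²−1) = 0`, i.e. `γ ∈ {1, −1}`.) -/
theorem stmt16 (N : ℕ) (hN : 4 ≤ N) (α γ a b f g : ℚ) (hα : α ≠ 0) (hγ : γ ≠ 0) :
    (2 * γ * f = 3 * α * g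
      ∧ α * (3 * ((N : ℚ) - 3) / N + f) = 2 * b * ((N : ℚ) - 2) / N
      ∧ γ * f - 3 * α * g + 2 * γ * a = f * (2 - (N : ℚ))
      ∧ γ * b = f
      ∧ 2 * b = 3 * α
      ∧ -α * g + γ * a
          = a * (2 - (N : ℚ)) - b * ((N : ℚ) - 1) * ((N : ℚ) - 2) / 3
            - α * (((N : ℚ) - 3) / 2) ^ 2
      ∧ γ * b = 2 * a + b + 3 * α * ((N : ℚ) - 3) / 2)
    ↔ ((γ = 1 ∨ γ = -1)
        ∧ α = 2 * γ / N ∧ g = γ ^ 2 ∧ f = 3 / N ∧ b = 3 * γ / N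
        ∧ a = 3 * (2 + γ - (N : ℚ)) / (2 * γ * N)) := by
  have hn0 : ((N : ℚ)) ≠ 0 := Nat.cast_ne_zero.mpr (by omega)
  constructor
  · rintro ⟨h1, h2, h3, h4, h5, h6, h7⟩
    have hb : b = 3 * α / 2 := by linarith
    subst hb
    have hf : f = γ * (3 * α / 2) := h4.symm
    subst hf
    have hg : g = γ ^ 2 := by
      have h3α : (3 : ℚ) * α ≠ 0 := by simpa using hα
      apply mul_left_cancel₀ h3α
      linear_combination -h1
    subst hg
    have ha : a = 3 * α * (γ + 2 - (N : ℚ)) / 4 := by linear_combination (-1/2 : ℚ) * h7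
    subst ha
    -- γ² = 1 from the sixth equation
    have hγ2 : γ ^ 2 = 1 := by
      have : α * γ ^ 2 = α * 1 := by linear_combination (-4 : ℚ) * h6
      exact mul_left_cancel₀ hα this
    -- α·γ·N = 2 from the second equation
    have hαγ : α * γ * (N : ℚ) = 2 := by
      have h3nα : (3 : ℚ) * (N : ℚ) * α ≠ 0 := by
        simp [hn0, hα]
      have key : (3 * (N : ℚ) * α) * (α * γ * (N : ℚ)) = (3 * (N : ℚ) * α) * 2 := by
        field_simp at h2
        linear_combination (3 * (N : ℚ) * α) * h2
      exact mul_left_cancel₀ h3nα key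
    refine ⟨?_, ?_, rfl, ?_, ?_, ?_⟩
    · rcases mul_eq_zero.mp (show (γ - 1) * (γ + 1) = 0 by linear_combination hγ2) with h | h
      · exact Or.inl (by linarith)
      · exact Or.inr (by linarith)
    · field_simp
      linear_combination γ * hαγ - α * (N : ℚ) * hγ2
    · field_simp
      linear_combination hαγ
    · field_simp
      linear_combination γ * hαγ - α * (N : ℚ) * hγ2
    · field_simp
      linear_combination (2 : ℚ) * (γ + 2 - (N : ℚ)) * hαγ
  · rintro ⟨hγ1, hαv, hgv, hfv, hbv, hav⟩
    subst hαv hgv hfv hbv hav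
    rcases hγ1 with rfl | rfl <;>
      refine ⟨?_, ?_, ?_, ?_, ?_, ?_, ?_⟩ <;>
      · field_simp
        try ring
        try tauto
end

section
/- The extended Miura map operator identity: for constants θ, γ, ε with ε² = 1, and h a differential polynomial, if v_t is defined by v_t = ∂(ε∂+2v)(h), then the operator identity θ·v_t + (ε∂ + θv)∘(−θ·h_x + 2h∂) = ((2−θ)·h_x + 2h∂)∘(ε∂ + θv) holds, where h_x = ∂(h), v_t = ∂(εh_x + 2vh), composition is composition of differential operators, and functions act by multiplication. -/
theorem Derivation.map_ofNat {R A M : Type*} [CommSemiring R] [CommSemiring A] [AddCommMonoid M]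
    [Algebra R A] [Module A M] [Module R M] (D : Derivation R A M) (n : ℕ) [n.AtLeastTwo] :
    D (OfNat.ofNat n : A) = 0 := by
  rw [← Nat.cast_ofNat]
  exact D.map_natCast _

section

variable {R : Type*} [CommRing R]

def AddMonoidHom.toDerivation (d : R →+ R) (hleib : ∀ a b : R, d (a * b) = d a * b + a * d b) :
    Derivation ℤ R R :=
  Derivation.mk' d.toIntLinearMap fun a b => by
    simp only [AddMonoidHom.coe_toIntLinearMap, hleib, smul_eq_mul]
    ring

theorem Derivation.miura_operator_identity {A : Type*} [CommSemiring A] [Algebra A R]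
    (D : Derivation A R R) (v h θ ε φ : R) (hθ : D θ = 0) (hε : D ε = 0) :
    θ * D (ε * D h + 2 * (v * h)) * φ
        + (ε * D (-θ * D h * φ + 2 * h * D φ) + θ * v * (-θ * D h * φ + 2 * h * D φ))
      = (2 - θ) * D h * (ε * D φ + θ * v * φ) + 2 * h * D (ε * D φ + θ * v * φ) := by
  simp only [Derivation.leibniz, map_add, map_neg, D.map_ofNat, hθ, hε, smul_eq_mul]
  ring

end

theorem stmt17_general {R : Type*} [CommRing R] (d : R →+ R)
    (hleib : ∀ a b : R, d (a * b) = d a * b + a * d b)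
    (v h θ ε : R) (hdθ : d θ = 0) (hdε : d ε = 0) :
    ∀ φ : R,
      θ * d (ε * d h + 2 * (v * h)) * φ
        + (ε * d (-θ * d h * φ + 2 * h * d φ)
            + θ * v * (-θ * d h * φ + 2 * h * d φ))
      = (2 - θ) * d h * (ε * d φ + θ * v * φ)
        + 2 * h * d (ε * d φ + θ * v * φ) :=
  fun φ => (d.toDerivation hleib).miura_operator_identity v h θ ε φ hdθ hdε

/-- **The extended Miura map operator identity (9.49).**  In a commutative
differential ring `(R, d)` with constants `θ, ε` (`dθ = dε = 0`, `ε² = 1`) and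
elements `v, h`, setting `v_t = ∂(ε∂ + 2v)(h) = ∂(ε h_x + 2vh)`, the operator
identity `θ·v_t + (ε∂ + θv)∘(−θ h_x + 2h∂) = ((2−θ) h_x + 2h∂)∘(ε∂ + θv)` holds;
it is stated pointwise, applied to an arbitrary `φ`. -/
theorem stmt17 {R : Type*} [CommRing R] (d : R →+ R)
    (hleib : ∀ a b : R, d (a * b) = d a * b + a * d b)
    (v h θ ε : R) (hε2 : ε * ε = 1) (hdθ : d θ = 0) (hdε : d ε = 0) :
    ∀ φ : R,
      θ * d (ε * d h + 2 * (v * h)) * φ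
        + (ε * d (-θ * d h * φ + 2 * h * d φ)
            + θ * v * (-θ * d h * φ + 2 * h * d φ))
      = (2 - θ) * d h * (ε * d φ + θ * v * φ)
        + 2 * h * d (ε * d φ + θ * v * φ) :=
  stmt17_general d hleib v h θ ε hdθ hdε
end

section
/- Direct sum of Hamiltonian extensions: let B, B¹, B² be skew-adjoint matrices of operators where B¹ extends B by rows/columns (O_{αm}, −O†_{βn}) with O depending only on the new variables φ and zero block in the φ-φ corner, and B² extends B by (Ō_{μm}, −Ō†_{νn}) with Ō depending only on ψ and zero ψ-ψ block. If the Poisson bracket defined by B¹ satisfies the Jacobi identity and the Poisson bracket defined by B² satisfies the Jacobi identity, then the combined matrix B with both extensions (and zero blocks among φ-φ, φ-ψ, ψ-ψ) also defines a bracket satisfying the Jacobi identity; it suffices to check the Jacobi identity on linear functionals, and every instance reduces to one of the following cases: all three Hamiltonians q-independent (bracket vanishes), two q-independent (bracket vanishes), all three φ,ψ-independent (Jacobi for B), or two φ,ψ-independent and one of the form U^tφ or V^tψ (Jacobi for B¹ or B² respectively), using trilinearity. -/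
/-- Embedding of the `(q, φ)`-indices into the full index set. -/
def embQPhi {ι κ μ : Type*} : ι ⊕ κ → ι ⊕ κ ⊕ μ :=
  Sum.elim Sum.inl (fun a => Sum.inr (Sum.inl a))

/-- Embedding of the `(q, ψ)`-indices into the full index set. -/
def embQPsi {ι κ μ : Type*} : ι ⊕ μ → ι ⊕ κ ⊕ μ :=
  Sum.elim Sum.inl (fun m => Sum.inr (Sum.inr m))

/-- Directional derivative of a function constant along a line vanishes. -/
lemma dirDeriv_zero {n : Type*} [Fintype n] {f : (n → ℝ) → ℝ} (hf : Differentiable ℝ f)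
    (x v : n → ℝ) (h : ∀ t : ℝ, f (x + t • v) = f x) : fderiv ℝ f x v = 0 := by
  have hcurve : HasDerivAt (fun t : ℝ => x + t • v) v 0 := by
    simpa using ((hasDerivAt_id (0:ℝ)).smul_const v).const_add x
  have h1 : HasDerivAt (fun t : ℝ => f (x + t • v)) (fderiv ℝ f x v) 0 := by
    have := (hf (x + (0:ℝ) • v)).hasFDerivAt.comp_hasDerivAt 0 hcurve
    simp only [zero_smul, add_zero] at this
    exact this
  have h2 : HasDerivAt (fun t : ℝ => f (x + t • v)) 0 0 := by
    have he : (fun t : ℝ => f (x + t • v)) = fun _ => f x := funext h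
    rw [he]; exact hasDerivAt_const 0 _
  exact h1.unique h2

/-- The Jacobi expression for a Poisson structure matrix. -/
noncomputable def Jac {n : Type*} [Fintype n] [DecidableEq n] (π : n → n → (n → ℝ) → ℝ)
    (i j k : n) (x : n → ℝ) : ℝ :=
  ∑ l, (π i l x * fderiv ℝ (π j k) x (Pi.single l 1)
    + π j l x * fderiv ℝ (π k i) x (Pi.single l 1)
    + π k l x * fderiv ℝ (π i j) x (Pi.single l 1))

/-- The Jacobi expression is invariant under cyclic permutation. -/
lemma jac_cyc {n : Type*} [Fintype n] [DecidableEq n] (π : n → n → (n → ℝ) → ℝ)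
    (i j k : n) (x : n → ℝ) : Jac π i j k x = Jac π j k i x :=
  Finset.sum_congr rfl (fun l _ => by ring)

/-- **Composition of Hamiltonian extensions (Proposition 19.3), coordinate
version.**  Consider a Poisson structure matrix `π` on the variables `(q, φ, ψ)`
(coordinates indexed by `ι ⊕ κ ⊕ μ`), antisymmetric and with differentiable
entries, such that: the `q–q` entries depend only on `q`; each `q–φ` entry is a
linear function of the `φ`-variables alone; each `q–ψ` entry is a linear function
of the `ψ`-variables alone; and all entries among `φ, ψ` vanish.  (It suffices to
check the Jacobi identity on linear functionals, i.e. on the coordinates, and the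
Jacobi expression is trilinear.)  If the restriction of the bracket to the
`(q, φ)`-variables satisfies the Jacobi identity and the restriction to the
`(q, ψ)`-variables satisfies the Jacobi identity, then the full bracket satisfies
the Jacobi identity. -/
theorem stmt18 {ι κ μ : Type*} [Fintype ι] [Fintype κ] [Fintype μ]
    [DecidableEq ι] [DecidableEq κ] [DecidableEq μ]
    (π : (ι ⊕ κ ⊕ μ) → (ι ⊕ κ ⊕ μ) → ((ι ⊕ κ ⊕ μ) → ℝ) → ℝ)
    (hdiff : ∀ i j, Differentiable ℝ (π i j))
    (hskew : ∀ i j x, π i j x = -π j i x)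
    (hqq : ∀ (i j : ι) (x y : (ι ⊕ κ ⊕ μ) → ℝ),
      (∀ i' : ι, x (Sum.inl i') = y (Sum.inl i')) →
        π (Sum.inl i) (Sum.inl j) x = π (Sum.inl i) (Sum.inl j) y)
    (hqφ : ∀ (i : ι) (a : κ), ∃ c : κ → ℝ, ∀ x : (ι ⊕ κ ⊕ μ) → ℝ,
      π (Sum.inl i) (Sum.inr (Sum.inl a)) x = ∑ b : κ, c b * x (Sum.inr (Sum.inl b)))
    (hqψ : ∀ (i : ι) (m : μ), ∃ c : μ → ℝ, ∀ x : (ι ⊕ κ ⊕ μ) → ℝ,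
      π (Sum.inl i) (Sum.inr (Sum.inr m)) x = ∑ b : μ, c b * x (Sum.inr (Sum.inr b)))
    (hzero : ∀ (a b : κ ⊕ μ) (x : (ι ⊕ κ ⊕ μ) → ℝ),
      π (Sum.inr a) (Sum.inr b) x = 0)
    (hJacQPhi : ∀ (i j k : ι ⊕ κ) (x : (ι ⊕ κ ⊕ μ) → ℝ),
      ∑ l : ι ⊕ κ,
        (π (embQPhi i) (embQPhi l) x
            * fderiv ℝ (π (embQPhi j) (embQPhi k)) x (Pi.single (embQPhi l) 1)
          + π (embQPhi j) (embQPhi l) x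
            * fderiv ℝ (π (embQPhi k) (embQPhi i)) x (Pi.single (embQPhi l) 1)
          + π (embQPhi k) (embQPhi l) x
            * fderiv ℝ (π (embQPhi i) (embQPhi j)) x (Pi.single (embQPhi l) 1)) = 0)
    (hJacQPsi : ∀ (i j k : ι ⊕ μ) (x : (ι ⊕ κ ⊕ μ) → ℝ),
      ∑ l : ι ⊕ μ,
        (π (embQPsi i) (embQPsi l) x
            * fderiv ℝ (π (embQPsi j) (embQPsi k)) x (Pi.single (embQPsi l) 1)
          + π (embQPsi j) (embQPsi l) x
            * fderiv ℝ (π (embQPsi k) (embQPsi i)) x (Pi.single (embQPsi l) 1)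
          + π (embQPsi k) (embQPsi l) x
            * fderiv ℝ (π (embQPsi i) (embQPsi j)) x (Pi.single (embQPsi l) 1)) = 0) :
    ∀ (i j k : ι ⊕ κ ⊕ μ) (x : (ι ⊕ κ ⊕ μ) → ℝ),
      ∑ l : ι ⊕ κ ⊕ μ,
        (π i l x * fderiv ℝ (π j k) x (Pi.single l 1)
          + π j l x * fderiv ℝ (π k i) x (Pi.single l 1)
          + π k l x * fderiv ℝ (π i j) x (Pi.single l 1)) = 0 := by
  -- function-level skew symmetry and its derivative version
  have flip : ∀ p q, π q p = fun x => -π p q x := fun p q => funext fun x => hskew q p x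
  have fflip : ∀ (p q : ι ⊕ κ ⊕ μ) (x v : (ι ⊕ κ ⊕ μ) → ℝ),
      fderiv ℝ (π q p) x v = -fderiv ℝ (π p q) x v := by
    intro p q x v
    rw [flip p q, fderiv_fun_neg]
    rfl
  -- directional-derivative vanishing lemmas
  have Z1 : ∀ (i j : ι) (c : κ ⊕ μ) (x : (ι ⊕ κ ⊕ μ) → ℝ),
      fderiv ℝ (π (Sum.inl i) (Sum.inl j)) x (Pi.single (Sum.inr c) 1) = 0 := by
    intro i j c x
    refine dirDeriv_zero (hdiff _ _) x _ fun t => hqq i j _ x fun i' => ?_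
    simp [Pi.single_apply]
  have Zφq : ∀ (i : ι) (a : κ) (l : ι) (x : (ι ⊕ κ ⊕ μ) → ℝ),
      fderiv ℝ (π (Sum.inl i) (Sum.inr (Sum.inl a))) x (Pi.single (Sum.inl l) 1) = 0 := by
    intro i a l x
    obtain ⟨c, hc⟩ := hqφ i a
    refine dirDeriv_zero (hdiff _ _) x _ fun t => ?_
    rw [hc, hc]
    refine Finset.sum_congr rfl fun b _ => ?_
    simp [Pi.single_apply]
  have Zφψ : ∀ (i : ι) (a : κ) (m : μ) (x : (ι ⊕ κ ⊕ μ) → ℝ),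
      fderiv ℝ (π (Sum.inl i) (Sum.inr (Sum.inl a))) x (Pi.single (Sum.inr (Sum.inr m)) 1) = 0 := by
    intro i a m x
    obtain ⟨c, hc⟩ := hqφ i a
    refine dirDeriv_zero (hdiff _ _) x _ fun t => ?_
    rw [hc, hc]
    refine Finset.sum_congr rfl fun b _ => ?_
    simp [Pi.single_apply]
  have Zψq : ∀ (i : ι) (m : μ) (l : ι) (x : (ι ⊕ κ ⊕ μ) → ℝ),
      fderiv ℝ (π (Sum.inl i) (Sum.inr (Sum.inr m))) x (Pi.single (Sum.inl l) 1) = 0 := by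
    intro i m l x
    obtain ⟨c, hc⟩ := hqψ i m
    refine dirDeriv_zero (hdiff _ _) x _ fun t => ?_
    rw [hc, hc]
    refine Finset.sum_congr rfl fun b _ => ?_
    simp [Pi.single_apply]
  have Zψφ : ∀ (i : ι) (m : μ) (a : κ) (x : (ι ⊕ κ ⊕ μ) → ℝ),
      fderiv ℝ (π (Sum.inl i) (Sum.inr (Sum.inr m))) x (Pi.single (Sum.inr (Sum.inl a)) 1) = 0 := by
    intro i m a x
    obtain ⟨c, hc⟩ := hqψ i m
    refine dirDeriv_zero (hdiff _ _) x _ fun t => ?_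
    rw [hc, hc]
    refine Finset.sum_congr rfl fun b _ => ?_
    simp [Pi.single_apply]
  have Z6 : ∀ (a b : κ ⊕ μ) (x v : (ι ⊕ κ ⊕ μ) → ℝ),
      fderiv ℝ (π (Sum.inr a) (Sum.inr b)) x v = 0 := by
    intro a b x v
    have h : π (Sum.inr a) (Sum.inr b) = fun _ => 0 := funext (hzero a b)
    rw [h, fderiv_fun_const]
    rfl
  -- flipped versions
  have Zφq' : ∀ (i : ι) (a : κ) (l : ι) (x : (ι ⊕ κ ⊕ μ) → ℝ),
      fderiv ℝ (π (Sum.inr (Sum.inl a)) (Sum.inl i)) x (Pi.single (Sum.inl l) 1) = 0 := by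
    intro i a l x; rw [fflip, Zφq]; simp
  have Zφψ' : ∀ (i : ι) (a : κ) (m : μ) (x : (ι ⊕ κ ⊕ μ) → ℝ),
      fderiv ℝ (π (Sum.inr (Sum.inl a)) (Sum.inl i)) x (Pi.single (Sum.inr (Sum.inr m)) 1) = 0 := by
    intro i a m x; rw [fflip, Zφψ]; simp
  have Zψq' : ∀ (i : ι) (m : μ) (l : ι) (x : (ι ⊕ κ ⊕ μ) → ℝ),
      fderiv ℝ (π (Sum.inr (Sum.inr m)) (Sum.inl i)) x (Pi.single (Sum.inl l) 1) = 0 := by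
    intro i m l x; rw [fflip, Zψq]; simp
  have Zψφ' : ∀ (i : ι) (m : μ) (a : κ) (x : (ι ⊕ κ ⊕ μ) → ℝ),
      fderiv ℝ (π (Sum.inr (Sum.inr m)) (Sum.inl i)) x (Pi.single (Sum.inr (Sum.inl a)) 1) = 0 := by
    intro i m a x; rw [fflip, Zψφ]; simp
  -- consolidated: any entry with an inr index has zero derivative in q-directions
  have Zq : ∀ (p : ι ⊕ κ ⊕ μ) (c : κ ⊕ μ) (l : ι) (x : (ι ⊕ κ ⊕ μ) → ℝ),
      fderiv ℝ (π p (Sum.inr c)) x (Pi.single (Sum.inl l) 1) = 0 := by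
    intro p c l x
    rcases p with p | p
    · rcases c with a | m
      · exact Zφq p a l x
      · exact Zψq p m l x
    · exact Z6 p c x _
  have Zq' : ∀ (p : ι ⊕ κ ⊕ μ) (c : κ ⊕ μ) (l : ι) (x : (ι ⊕ κ ⊕ μ) → ℝ),
      fderiv ℝ (π (Sum.inr c) p) x (Pi.single (Sum.inl l) 1) = 0 := by
    intro p c l x
    rcases p with p | p
    · rcases c with a | m
      · exact Zφq' p a l x
      · exact Zψq' p m l x
    · exact Z6 c p x _
  -- Case: all three indices of q-type
  have Hqqq : ∀ (i j k : ι) (x : (ι ⊕ κ ⊕ μ) → ℝ),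
      Jac π (Sum.inl i) (Sum.inl j) (Sum.inl k) x = 0 := by
    intro i j k x
    have h1 := hJacQPhi (Sum.inl i) (Sum.inl j) (Sum.inl k) x
    rw [Fintype.sum_sum_type] at h1
    simp only [embQPhi, Sum.elim_inl, Sum.elim_inr, Z1, mul_zero, add_zero,
      Finset.sum_const_zero] at h1
    unfold Jac
    rw [Fintype.sum_sum_type, Fintype.sum_sum_type]
    simp only [Z1, mul_zero, add_zero, Finset.sum_const_zero]
    linarith [h1]
  -- Case: two q-indices and one φ-index
  have Hqqφ : ∀ (i j : ι) (a : κ) (x : (ι ⊕ κ ⊕ μ) → ℝ),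
      Jac π (Sum.inl i) (Sum.inl j) (Sum.inr (Sum.inl a)) x = 0 := by
    intro i j a x
    have h1 := hJacQPhi (Sum.inl i) (Sum.inl j) (Sum.inr a) x
    rw [Fintype.sum_sum_type] at h1
    simp only [embQPhi, Sum.elim_inl, Sum.elim_inr] at h1
    unfold Jac
    rw [Fintype.sum_sum_type, Fintype.sum_sum_type]
    have hμ : ∑ m : μ,
        (π (Sum.inl i) (Sum.inr (Sum.inr m)) x
            * fderiv ℝ (π (Sum.inl j) (Sum.inr (Sum.inl a))) x (Pi.single (Sum.inr (Sum.inr m)) 1)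
          + π (Sum.inl j) (Sum.inr (Sum.inr m)) x
            * fderiv ℝ (π (Sum.inr (Sum.inl a)) (Sum.inl i)) x (Pi.single (Sum.inr (Sum.inr m)) 1)
          + π (Sum.inr (Sum.inl a)) (Sum.inr (Sum.inr m)) x
            * fderiv ℝ (π (Sum.inl i) (Sum.inl j)) x (Pi.single (Sum.inr (Sum.inr m)) 1)) = 0 := by
      refine Finset.sum_eq_zero fun m _ => ?_
      rw [Zφψ, Zφψ', hzero]
      ring
    rw [hμ]
    linarith [h1]
  -- Case: two q-indices and one ψ-index
  have Hqqψ : ∀ (i j : ι) (m : μ) (x : (ι ⊕ κ ⊕ μ) → ℝ),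
      Jac π (Sum.inl i) (Sum.inl j) (Sum.inr (Sum.inr m)) x = 0 := by
    intro i j m x
    have h1 := hJacQPsi (Sum.inl i) (Sum.inl j) (Sum.inr m) x
    rw [Fintype.sum_sum_type] at h1
    simp only [embQPsi, Sum.elim_inl, Sum.elim_inr] at h1
    unfold Jac
    rw [Fintype.sum_sum_type, Fintype.sum_sum_type]
    have hκ : ∑ a : κ,
        (π (Sum.inl i) (Sum.inr (Sum.inl a)) x
            * fderiv ℝ (π (Sum.inl j) (Sum.inr (Sum.inr m))) x (Pi.single (Sum.inr (Sum.inl a)) 1)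
          + π (Sum.inl j) (Sum.inr (Sum.inl a)) x
            * fderiv ℝ (π (Sum.inr (Sum.inr m)) (Sum.inl i)) x (Pi.single (Sum.inr (Sum.inl a)) 1)
          + π (Sum.inr (Sum.inr m)) (Sum.inr (Sum.inl a)) x
            * fderiv ℝ (π (Sum.inl i) (Sum.inl j)) x (Pi.single (Sum.inr (Sum.inl a)) 1)) = 0 := by
      refine Finset.sum_eq_zero fun a _ => ?_
      rw [Zψφ, Zψφ', hzero]
      ring
    rw [hκ]
    linarith [h1]
  -- Case: the last two indices are of (φ,ψ)-type
  have H2 : ∀ (i : ι ⊕ κ ⊕ μ) (a b : κ ⊕ μ) (x : (ι ⊕ κ ⊕ μ) → ℝ),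
      Jac π i (Sum.inr a) (Sum.inr b) x = 0 := by
    intro i a b x
    unfold Jac
    refine Finset.sum_eq_zero fun l _ => ?_
    rcases l with l | c
    · rw [Z6, Zq', Zq]
      ring
    · rw [Z6, hzero a, hzero b]
      ring
  intro i j k x
  show Jac π i j k x = 0
  rcases i with i | a
  · rcases j with j | b
    · rcases k with k | c
      · exact Hqqq i j k x
      · rcases c with c | c
        · exact Hqqφ i j c x
        · exact Hqqψ i j c x
    · rcases k with k | c
      · rw [jac_cyc, jac_cyc]
        rcases b with b | b
        · exact Hqqφ k i b x
        · exact Hqqψ k i b x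
      · exact H2 _ b c x
  · rcases j with j | b
    · rcases k with k | c
      · rw [jac_cyc]
        rcases a with a | a
        · exact Hqqφ j k a x
        · exact Hqqψ j k a x
      · rw [jac_cyc]
        exact H2 _ c a x
    · rcases k with k | c
      · rw [jac_cyc, jac_cyc]
        exact H2 _ a b x
      · exact H2 _ b c x
end
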